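/- Let n ≥ 1 be an integer, β ≥ 0 a real number, and for s ∈ [0,1] let μ_{βs}(σ) ∝ exp(βs·M(σ)²/(2n)) be the mean-field Ising measure on Ω = {±1}ⁿ, where M(σ) = Σᵢ σᵢ. For σ ∈ Ω, i ∈ [n], and s ∈ [0,1], define the single-site Glauber transition rate p_s(σ, σ^{⊕i}) = (1/n)·μ_{βs}(σ^{⊕i})/(μ_{βs}(σ) + μ_{βs}(σ^{⊕i})), where σ^{⊕i} is σ with the i-th spin flipped. Then for all s, s' ∈ [0,1], σ ∈ Ω, and i ∈ [n]: |p_{s'}(σ, σ^{⊕i})/p_s(σ, σ^{⊕i}) − 1| ≤ exp(2β·|s' − s|) − 1. -/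

import Mathlib

/-!
The normalising constant cancels in the Glauber rate, which equals `(1/n) / (1 + exp (βs·D/(2n)))`
with `D = M(σ)² − M(σ^{⊕i})²`. Hence the ratio of the rates at times `s'` and `s` is
`(1 + e^a) / (1 + e^b)` with `|a − b| = β|s − s'|·|D|/(2n)`. Such a ratio lies in
`[e^{-|a-b|}, e^{|a-b|}]`, so it differs from `1` by at most `e^{|a-b|} − 1`, and
`|D| = |M − M'|·|M + M'| ≤ 2·2n` gives `|a − b| ≤ 2β|s' − s|`.
-/

open Finset

noncomputable section

/-- Total magnetization of a spin configuration (`true` ↦ `+1`, `false` ↦ `−1`). -/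
def mag (n : ℕ) (σ : Fin n → Bool) : ℤ := ∑ i, (if σ i then 1 else -1)

/-- The configuration `σ` with the `i`-th spin flipped. -/
def flipSpin (n : ℕ) (σ : Fin n → Bool) (i : Fin n) : Fin n → Bool :=
  Function.update σ i (!σ i)

/-- The mean-field Ising measure `μ_β(σ) = exp(β·M(σ)²/(2n)) / Z` on `{±1}ⁿ`. -/
def isingMu (n : ℕ) (β : ℝ) (σ : Fin n → Bool) : ℝ :=
  Real.exp (β * (mag n σ : ℝ) ^ 2 / (2 * n)) /
    ∑ τ : Fin n → Bool, Real.exp (β * (mag n τ : ℝ) ^ 2 / (2 * n))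

/-- The single-site Glauber transition rate at schedule time `s` along the linear
inverse-temperature schedule `s ↦ βs`. -/
def glauberRate (n : ℕ) (β : ℝ) (s : ℝ) (σ : Fin n → Bool) (i : Fin n) : ℝ :=
  (1 / n) * isingMu n (β * s) (flipSpin n σ i) /
    (isingMu n (β * s) σ + isingMu n (β * s) (flipSpin n σ i))

end

open Real

theorem mag_flipSpin (n : ℕ) (σ : Fin n → Bool) (i : Fin n) :
    mag n (flipSpin n σ i) = mag n σ - 2 * (if σ i then 1 else -1) := by
  have hflip : (fun j => if flipSpin n σ i j then (1 : ℤ) else -1) =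
      Function.update (fun j => if σ j then 1 else -1) i (if !σ i then 1 else -1) :=
    funext (Function.apply_update (fun _ b => if b then (1 : ℤ) else -1) σ i (!σ i))
  rw [mag, mag, hflip, sum_update_of_mem (mem_univ i),
    sum_eq_add_sum_sdiff_singleton_of_mem (mem_univ i)]
  cases σ i <;> simp <;> ring

theorem abs_mag_le (n : ℕ) (σ : Fin n → Bool) : |mag n σ| ≤ n :=
  calc |mag n σ| ≤ ∑ i, |(if σ i then (1 : ℤ) else -1)| := abs_sum_le_sum_abs _ _
    _ = n := by simp [apply_ite]

theorem abs_sq_mag_sub_sq_mag_flipSpin_le (n : ℕ) (σ : Fin n → Bool) (i : Fin n) :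
    |(mag n σ : ℝ) ^ 2 - (mag n (flipSpin n σ i) : ℝ) ^ 2| ≤ 4 * n := by
  have hsub : |mag n σ - mag n (flipSpin n σ i)| = 2 := by
    rw [mag_flipSpin]; cases σ i <;> simp
  have hadd : |mag n σ + mag n (flipSpin n σ i)| ≤ 2 * n :=
    (abs_add_le _ _).trans (by linarith [abs_mag_le n σ, abs_mag_le n (flipSpin n σ i)])
  have : |mag n σ ^ 2 - mag n (flipSpin n σ i) ^ 2| ≤ 4 * n := by
    rw [sq_sub_sq, abs_mul, hsub]; linarith
  exact_mod_cast this

theorem exp_div_exp_add_exp (x y : ℝ) : exp y / (exp x + exp y) = (1 + exp (x - y))⁻¹ := by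
  rw [exp_sub]; field_simp; ring

theorem one_add_exp_le_exp_abs_sub_mul (a b : ℝ) :
    1 + exp a ≤ exp |a - b| * (1 + exp b) := by
  have h1 : 1 ≤ exp |a - b| := one_le_exp (abs_nonneg _)
  have h2 : exp a ≤ exp |a - b| * exp b := by
    rw [← exp_add]; exact exp_le_exp.2 (by linarith [le_abs_self (a - b)])
  nlinarith [exp_pos b]

theorem abs_sub_one_le_exp_sub_one {r c : ℝ} (hlow : exp (-c) ≤ r) (hup : r ≤ exp c) :
    |r - 1| ≤ exp c - 1 := by
  -- the lower side is `1 - e^{-c} ≤ e^c - 1`, i.e. `e^c + e^{-c} ≥ 2`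
  rw [abs_le]
  constructor <;> linarith [add_one_le_exp c, add_one_le_exp (-c)]

theorem abs_one_add_exp_div_one_add_exp_sub_one_le (a b : ℝ) :
    |(1 + exp a) / (1 + exp b) - 1| ≤ exp |a - b| - 1 := by
  have hpos (x : ℝ) : 0 < 1 + exp x := by positivity
  apply abs_sub_one_le_exp_sub_one
  · rw [le_div_iff₀ (hpos b), exp_neg, inv_mul_le_iff₀ (exp_pos _), abs_sub_comm]
    exact one_add_exp_le_exp_abs_sub_mul b a
  · rw [div_le_iff₀ (hpos b)]
    exact one_add_exp_le_exp_abs_sub_mul a b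

theorem glauberRate_eq (n : ℕ) (β t : ℝ) (σ : Fin n → Bool) (i : Fin n) :
    glauberRate n β t σ i = (1 / n) /
      (1 + exp (β * t * ((mag n σ : ℝ) ^ 2 - (mag n (flipSpin n σ i) : ℝ) ^ 2) / (2 * n))) := by
  have hZ : ∑ τ : Fin n → Bool, exp (β * t * (mag n τ : ℝ) ^ 2 / (2 * n)) ≠ 0 :=
    (sum_pos (fun _ _ => exp_pos _) univ_nonempty).ne'
  rw [glauberRate, isingMu, isingMu, ← add_div, mul_div_assoc, div_div_div_cancel_right₀ hZ,
    exp_div_exp_add_exp, ← div_eq_mul_inv, ← sub_div, ← mul_sub]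

theorem glauber_rate_local_stability_general (n : ℕ) (hn : 1 ≤ n) (β : ℝ) (hβ : 0 ≤ β)
    (s s' : ℝ) (σ : Fin n → Bool) (i : Fin n) :
    |glauberRate n β s' σ i / glauberRate n β s σ i - 1| ≤
      Real.exp (2 * β * |s' - s|) - 1 := by
  have hn' : (0 : ℝ) < n := by exact_mod_cast hn
  have hD := abs_sq_mag_sub_sq_mag_flipSpin_le n σ i
  set D := (mag n σ : ℝ) ^ 2 - (mag n (flipSpin n σ i) : ℝ) ^ 2
  have hgap : |β * s * D / (2 * n) - β * s' * D / (2 * n)| ≤ 2 * β * |s' - s| := by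
    rw [show β * s * D / (2 * n) - β * s' * D / (2 * n) = β * (s - s') * (D / (2 * n)) by ring,
      abs_mul, abs_mul, abs_of_nonneg hβ, abs_sub_comm s, abs_div,
      abs_of_pos (show (0 : ℝ) < 2 * n by positivity)]
    have : |D| / (2 * n) ≤ 2 := by rw [div_le_iff₀ (by positivity)]; linarith
    calc β * |s' - s| * (|D| / (2 * n)) ≤ β * |s' - s| * 2 := by gcongr
      _ = 2 * β * |s' - s| := by ring
  rw [glauberRate_eq, glauberRate_eq, div_div_div_cancel_left' _ _ (by positivity)]
  calc _ ≤ exp |β * s * D / (2 * n) - β * s' * D / (2 * n)| - 1 :=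
        abs_one_add_exp_div_one_add_exp_sub_one_le _ _
    _ ≤ _ := by gcongr

/-- Local stability of the annealed single-site Glauber rates of the mean-field
Ising model along the linear schedule. -/
theorem glauber_rate_local_stability (n : ℕ) (hn : 1 ≤ n) (β : ℝ) (hβ : 0 ≤ β)
    (s s' : ℝ) (hs : s ∈ Set.Icc (0 : ℝ) 1) (hs' : s' ∈ Set.Icc (0 : ℝ) 1)
    (σ : Fin n → Bool) (i : Fin n) :
    |glauberRate n β s' σ i / glauberRate n β s σ i - 1| ≤
      Real.exp (2 * β * |s' - s|) - 1 :=
  glauber_rate_local_stability_general n hn β hβ s s' σ i
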